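/- Let (Ω, F, P) be a probability space with filtration (F_t)_{t≥0}, let (ξ_t)_{t≥1} be random variables with ξ_t F_t-measurable and |ξ_t| ≤ B almost surely for some constant B < ∞, and set μ_t := E[ξ_t | F_{t−1}]. Let (λ_t)_{t≥1} and (q_t)_{t≥0} be predictable sequences (λ_t and q_{t−1} are F_{t−1}-measurable) with 0 ≤ λ_t < 1 almost surely and ξ_t − q_{t−1} ≥ −1 almost surely. Define ψ_E(λ) := −log(1 − λ) − λ. Then the process M_T := exp( Σ_{t=1}^T [ λ_t·(ξ_t − μ_t) − (ξ_t − q_{t−1})²·ψ_E(λ_t) ] ), with M_0 := 1, is a nonnegative supermartingale with respect to (F_t). -/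

import Mathlib

/-!
With `ψ_E(l) = -log (1 - l) - l`, Fan's inequality `exp (l y - y² ψ_E(l)) ≤ 1 + l y` holds
for `0 ≤ l < 1` and `y ≥ -1`: for `y = -s ≤ 0` it is `ψ_E(s l) ≤ s² ψ_E(l)`, read off the
power series `ψ_E(l) = ∑_{n ≥ 2} lⁿ / n`; for `y ≥ 0` it follows from `l² / 2 ≤ ψ_E(l)`
and `log (1 + u) ≥ 2u / (u + 2)`. With `y = ξ_t - q_{t-1}` it bounds the factor
`M_t / M_{t-1}` by `e^a (1 + λ_t (ξ_t - q_{t-1}))`, `a = λ_t (q_{t-1} - μ_t)`, which is affine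
in `ξ_t` with predictable coefficients, so its conditional expectation is `e^a (1 - a) ≤ 1`.
-/

open MeasureTheory ProbabilityTheory Filter

noncomputable def psiE (l : ℝ) : ℝ := -Real.log (1 - l) - l

lemma hasSum_psiE {l : ℝ} (hl : |l| < 1) :
    HasSum (fun n : ℕ => l ^ (n + 2) / (n + 2)) (psiE l) := by
  have h := (hasSum_nat_add_iff' 1).mpr (Real.hasSum_pow_div_log_of_abs_lt_one hl)
  norm_num [add_assoc] at h
  exact h

lemma sq_div_two_le_psiE {l : ℝ} (h0 : 0 ≤ l) (h1 : l < 1) : l ^ 2 / 2 ≤ psiE l := by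
  have := le_hasSum (hasSum_psiE (abs_lt.2 ⟨by linarith, h1⟩)) 0 fun n _ => by positivity
  norm_num at this
  exact this

lemma psiE_mul_le {s l : ℝ} (hs0 : 0 ≤ s) (hs1 : s ≤ 1) (h0 : 0 ≤ l) (h1 : l < 1) :
    psiE (s * l) ≤ s ^ 2 * psiE l := by
  have hl : |l| < 1 := abs_lt.2 ⟨by linarith, h1⟩
  have hsl : |s * l| < 1 := by
    rw [abs_mul, abs_of_nonneg hs0]; nlinarith [abs_nonneg l]
  refine hasSum_le (fun n => ?_) (hasSum_psiE hsl) ((hasSum_psiE hl).mul_left (s ^ 2))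
  calc (s * l) ^ (n + 2) / (n + 2) = s ^ n * (s ^ 2 * (l ^ (n + 2) / (n + 2))) := by ring
    _ ≤ 1 * (s ^ 2 * (l ^ (n + 2) / (n + 2))) := by gcongr; exact pow_le_one₀ hs0 hs1
    _ = s ^ 2 * (l ^ (n + 2) / (n + 2)) := one_mul _

lemma mul_sub_sq_mul_psiE_le_log {l y : ℝ} (h0 : 0 ≤ l) (h1 : l < 1) (hy : -1 ≤ y) :
    l * y - y ^ 2 * psiE l ≤ Real.log (1 + l * y) := by
  rcases le_total y 0 with hy0 | hy0
  · have := psiE_mul_le (s := -y) (by linarith) (by linarith) h0 h1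
    rw [neg_sq, psiE, show 1 - -y * l = 1 + l * y by ring] at this
    linarith
  · have hu : 0 ≤ l * y := mul_nonneg h0 hy0
    have hlog := Real.le_log_one_add_of_nonneg hu
    have hpsi := sq_div_two_le_psiE h0 h1
    have : l * y - (l * y) ^ 2 / 2 ≤ 2 * (l * y) / (l * y + 2) := by
      rw [le_div_iff₀ (by linarith)]; nlinarith [pow_nonneg hu 3]
    nlinarith [mul_le_mul_of_nonneg_left hpsi (sq_nonneg y)]

noncomputable def empiricalBernsteinIncrement (l x c q : ℝ) : ℝ :=
  l * (x - c) - (x - q) ^ 2 * psiE l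

lemma exp_empiricalBernsteinIncrement_le {l x c q : ℝ} (h0 : 0 ≤ l) (h1 : l < 1)
    (hxq : -1 ≤ x - q) :
    Real.exp (empiricalBernsteinIncrement l x c q)
      ≤ Real.exp (l * (q - c)) * (1 + l * (x - q)) := by
  have hpos : 0 < 1 + l * (x - q) := by nlinarith
  rw [empiricalBernsteinIncrement,
    show l * (x - c) - (x - q) ^ 2 * psiE l = l * (q - c) + (l * (x - q) - (x - q) ^ 2 * psiE l)
      by ring, Real.exp_add]
  gcongr
  exact (Real.le_log_iff_exp_le hpos).1 (mul_sub_sq_mul_psiE_le_log h0 h1 hxq)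

lemma mul_sub_le_two_mul {l x c B : ℝ} (h0 : 0 ≤ l) (h1 : l ≤ 1) (hx : |x| ≤ B)
    (hc : |c| ≤ B) : l * (x - c) ≤ 2 * B := by
  calc l * (x - c) ≤ l * |x - c| := by gcongr; exact le_abs_self (x - c)
    _ ≤ 1 * |x - c| := by gcongr
    _ ≤ 2 * B := by linarith [abs_sub x c]

lemma empiricalBernsteinIncrement_le {l x c q B : ℝ} (h0 : 0 ≤ l) (h1 : l < 1) (hx : |x| ≤ B)
    (hc : |c| ≤ B) : empiricalBernsteinIncrement l x c q ≤ 2 * B := by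
  have hψ : 0 ≤ psiE l := by nlinarith [sq_div_two_le_psiE h0 h1, sq_nonneg l]
  have := mul_sub_le_two_mul h0 h1.le hx hc
  unfold empiricalBernsteinIncrement
  nlinarith [mul_nonneg (sq_nonneg (x - q)) hψ]

lemma exp_mul_one_sub_le_one (a : ℝ) : Real.exp a * (1 - a) ≤ 1 := by
  calc Real.exp a * (1 - a) ≤ Real.exp a * Real.exp (-a) := by
        gcongr; exact Real.one_sub_le_exp_neg a
    _ = 1 := by rw [← Real.exp_add, add_neg_cancel, Real.exp_zero]

lemma abs_mul_exp_mul_sub_le {l x c q B : ℝ} (h0 : 0 ≤ l) (h1 : l ≤ 1) (hx : |x| ≤ B)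
    (hc : |c| ≤ B) (hxq : -1 ≤ x - q) :
    |l * Real.exp (l * (q - c))| ≤ Real.exp (2 * B + 1) := by
  have hqx : l * (q - x) ≤ 1 := by nlinarith
  have hxc := mul_sub_le_two_mul h0 h1 hx hc
  rw [abs_mul, abs_of_nonneg h0, Real.abs_exp]
  calc l * Real.exp (l * (q - c)) ≤ 1 * Real.exp (2 * B + 1) :=
        mul_le_mul h1 (Real.exp_le_exp.2 (by linarith)) (by positivity) zero_le_one
    _ = Real.exp (2 * B + 1) := one_mul _

lemma abs_exp_mul_sub_mul_one_add_le {l x c q B : ℝ} (h0 : 0 ≤ l) (h1 : l ≤ 1)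
    (hx : |x| ≤ B) (hc : |c| ≤ B) (hxq : -1 ≤ x - q) :
    |Real.exp (l * (q - c)) * (1 + l * (x - q))| ≤ Real.exp (2 * B) := by
  have hpos : 0 ≤ 1 + l * (x - q) := by nlinarith
  rw [abs_of_nonneg (by positivity)]
  calc Real.exp (l * (q - c)) * (1 + l * (x - q))
      ≤ Real.exp (l * (q - c)) * Real.exp (l * (x - q)) := by
        gcongr; linarith [Real.add_one_le_exp (l * (x - q))]
    _ = Real.exp (l * (x - c)) := by rw [← Real.exp_add]; ring_nf
    _ ≤ Real.exp (2 * B) := Real.exp_le_exp.2 (mul_sub_le_two_mul h0 h1 hx hc)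

lemma Measurable.empiricalBernsteinIncrement {Ω : Type*} {mΩ : MeasurableSpace Ω}
    {l x c q : Ω → ℝ} (hl : Measurable l) (hx : Measurable x) (hc : Measurable c)
    (hq : Measurable q) :
    Measurable fun ω => empiricalBernsteinIncrement (l ω) (x ω) (c ω) (q ω) := by
  unfold _root_.empiricalBernsteinIncrement psiE
  fun_prop

section

variable {Ω : Type*} {m m0 : MeasurableSpace Ω} {μ : Measure Ω} [IsFiniteMeasure μ]

theorem condExp_exp_empiricalBernsteinIncrement_le_one (hm : m ≤ m0) {x l q : Ω → ℝ}
    {B : ℝ} (hx : Measurable x) (hxB : ∀ᵐ ω ∂μ, |x ω| ≤ B) (hl : Measurable[m] l)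
    (hq : Measurable[m] q) (hl01 : ∀ᵐ ω ∂μ, l ω ∈ Set.Ico 0 1)
    (hxq : ∀ᵐ ω ∂μ, -1 ≤ x ω - q ω) :
    μ[fun ω => Real.exp (empiricalBernsteinIncrement (l ω) (x ω) (μ[x | m] ω) (q ω)) | m]
      ≤ᵐ[μ] 1 := by
  set c := μ[x | m]
  have hc : Measurable[m] c := stronglyMeasurable_condExp.measurable
  have hcB : ∀ᵐ ω ∂μ, |c ω| ≤ B := ae_bdd_abs_condExp_of_ae_bdd_abs hxB
  have hxi : Integrable x μ :=
    (integrable_const B).mono' hx.aestronglyMeasurable (by simpa using hxB)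
  -- `G * x + H` is Fan's bound `e^(l (q - c)) (1 + l (x - q))`, affine in `x` with
  -- `m`-measurable coefficients.
  set G : Ω → ℝ := fun ω => l ω * Real.exp (l ω * (q ω - c ω))
  set H : Ω → ℝ := fun ω => Real.exp (l ω * (q ω - c ω)) * (1 - l ω * q ω)
  have hW_eq : ∀ ω,
      (G * x + H) ω = Real.exp (l ω * (q ω - c ω)) * (1 + l ω * (x ω - q ω)) := fun ω => by
    simp only [G, H, Pi.add_apply, Pi.mul_apply]
    ring
  have hGm : StronglyMeasurable[m] G := by fun_prop
  have hHm : StronglyMeasurable[m] H := by fun_prop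
  have hGx : Integrable (G * x) μ := by
    refine hxi.bdd_mul (c := Real.exp (2 * B + 1)) (hGm.mono hm).aestronglyMeasurable ?_
    filter_upwards [hxB, hcB, hl01, hxq] with ω hxω hcω ⟨hl0, hl1⟩ hxqω
    exact abs_mul_exp_mul_sub_le hl0 hl1.le hxω hcω hxqω
  have hW : Integrable (G * x + H) μ := by
    refine (integrable_const (Real.exp (2 * B))).mono'
      (hGx.aestronglyMeasurable.add (hHm.mono hm).aestronglyMeasurable) ?_
    filter_upwards [hxB, hcB, hl01, hxq] with ω hxω hcω ⟨hl0, hl1⟩ hxqω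
    rw [Real.norm_eq_abs, hW_eq]
    exact abs_exp_mul_sub_mul_one_add_le hl0 hl1.le hxω hcω hxqω
  -- `q` need not be bounded, so `H` is only integrable as the difference `W - G * x`.
  have hH : Integrable H μ := by simpa using hW.sub hGx
  have hYW : ∀ᵐ ω ∂μ, Real.exp (empiricalBernsteinIncrement (l ω) (x ω) (c ω) (q ω))
      ≤ (G * x + H) ω := by
    filter_upwards [hl01, hxq] with ω ⟨hl0, hl1⟩ hxqω
    exact (exp_empiricalBernsteinIncrement_le hl0 hl1 hxqω).trans_eq (hW_eq ω).symm
  have hY : Integrable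
      (fun ω => Real.exp (empiricalBernsteinIncrement (l ω) (x ω) (c ω) (q ω))) μ := by
    refine hW.mono' ?_ ?_
    · exact (Real.measurable_exp.comp ((hl.mono hm le_rfl).empiricalBernsteinIncrement hx
        (hc.mono hm le_rfl) (hq.mono hm le_rfl))).aestronglyMeasurable
    · filter_upwards [hYW] with ω h
      rwa [Real.norm_eq_abs, Real.abs_exp]
  calc μ[fun ω => Real.exp (empiricalBernsteinIncrement (l ω) (x ω) (c ω) (q ω)) | m]
      ≤ᵐ[μ] μ[G * x + H | m] := condExp_mono hY hW hYW
    _ =ᵐ[μ] G * c + H := (condExp_add hGx hH m).trans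
        ((condExp_mul_of_stronglyMeasurable_left hGm hGx hxi).add
          (condExp_of_stronglyMeasurable hm hHm hH).eventuallyEq)
    _ ≤ᵐ[μ] 1 := Eventually.of_forall fun ω => by
      refine (exp_mul_one_sub_le_one (l ω * (q ω - c ω))).trans_eq' ?_
      simp only [G, H, Pi.add_apply, Pi.mul_apply]
      ring

theorem supermartingale_exp_sum_Icc {ℱ : Filtration ℕ m0} {Y : ℕ → Ω → ℝ}
    (hmeas : ∀ n, Measurable[ℱ (n + 1)] (Y (n + 1)))
    (hbdd : ∀ n, ∃ C, ∀ᵐ ω ∂μ, Y (n + 1) ω ≤ C)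
    (hcond : ∀ n, μ[fun ω => Real.exp (Y (n + 1) ω) | ℱ n] ≤ᵐ[μ] 1) :
    Supermartingale (fun n ω => Real.exp (∑ t ∈ Finset.Icc 1 n, Y t ω)) ℱ μ := by
  set X : ℕ → Ω → ℝ := fun n ω => Real.exp (∑ t ∈ Finset.Icc 1 n, Y t ω)
  set E : ℕ → Ω → ℝ := fun n ω => Real.exp (Y (n + 1) ω)
  have hrec : ∀ n, X (n + 1) = X n * E n := fun n => funext fun ω => by
    simp only [X, E, Finset.sum_Icc_succ_top (Nat.le_add_left 1 n), Real.exp_add, Pi.mul_apply]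
  have hEm : ∀ n, Measurable[ℱ (n + 1)] (E n) := fun n => Real.measurable_exp.comp (hmeas n)
  have hE : ∀ n, Integrable (E n) μ ∧ ∃ C, ∀ᵐ ω ∂μ, ‖E n ω‖ ≤ C := by
    intro n
    obtain ⟨C, hC⟩ := hbdd n
    have hbound : ∀ᵐ ω ∂μ, ‖E n ω‖ ≤ Real.exp C := by
      filter_upwards [hC] with ω hω
      rwa [Real.norm_eq_abs, Real.abs_exp, Real.exp_le_exp]
    refine ⟨(integrable_const _).mono' ?_ hbound, _, hbound⟩
    exact ((hEm n).mono (ℱ.le _) le_rfl).aestronglyMeasurable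
  have hX : ∀ n, Measurable[ℱ n] (X n) ∧ Integrable (X n) μ := by
    intro n
    induction n with
    | zero => simp [X]
    | succ n ih =>
      obtain ⟨C, hC⟩ := (hE n).2
      rw [hrec]
      exact ⟨(ih.1.mono (ℱ.mono n.le_succ) le_rfl).mul (hEm n), ih.2.mul_bdd (hE n).1.1 hC⟩
  refine supermartingale_nat (fun n => (hX n).1.stronglyMeasurable) (fun n => (hX n).2)
    fun n => ?_
  rw [hrec]
  filter_upwards [condExp_mul_of_stronglyMeasurable_left (hX n).1.stronglyMeasurable
    (hrec n ▸ (hX (n + 1)).2) (hE n).1, hcond n] with ω hmul hle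
  rw [hmul]
  exact mul_le_of_le_one_right (Real.exp_nonneg _) hle

end

/-- The empirical-Bernstein exponential process is a nonnegative test
supermartingale. -/
theorem empirical_bernstein_supermartingale
    {Ω : Type*} {m0 : MeasurableSpace Ω} (μ : Measure Ω) [IsProbabilityMeasure μ]
    (ℱ : Filtration ℕ m0) (ξ lam q : ℕ → Ω → ℝ) (B : ℝ)
    (hadapted : ∀ t, Measurable[ℱ t] (ξ t))
    (hξbd : ∀ t, ∀ᵐ ω ∂μ, |ξ t ω| ≤ B)
    (hlampred : ∀ t, 1 ≤ t → Measurable[ℱ (t - 1)] (lam t))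
    (hqpred : ∀ t, Measurable[ℱ t] (q t))
    (hlam : ∀ t, 1 ≤ t → ∀ᵐ ω ∂μ, lam t ω ∈ Set.Ico (0 : ℝ) 1)
    (hq : ∀ t, 1 ≤ t → ∀ᵐ ω ∂μ, -1 ≤ ξ t ω - q (t - 1) ω) :
    Supermartingale (fun T ω => Real.exp (∑ t ∈ Finset.Icc 1 T,
        (lam t ω * (ξ t ω - (μ[ξ t | ℱ (t - 1)]) ω)
          - (ξ t ω - q (t - 1) ω) ^ 2 * (-Real.log (1 - lam t ω) - lam t ω)))) ℱ μ ∧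
      (∀ T ω, 0 ≤ Real.exp (∑ t ∈ Finset.Icc 1 T,
        (lam t ω * (ξ t ω - (μ[ξ t | ℱ (t - 1)]) ω)
          - (ξ t ω - q (t - 1) ω) ^ 2 * (-Real.log (1 - lam t ω) - lam t ω)))) ∧
      (∀ ω, Real.exp (∑ t ∈ Finset.Icc 1 0,
        (lam t ω * (ξ t ω - (μ[ξ t | ℱ (t - 1)]) ω)
          - (ξ t ω - q (t - 1) ω) ^ 2 * (-Real.log (1 - lam t ω) - lam t ω))) = 1) := by
  refine ⟨?_, fun _ _ => Real.exp_nonneg _, fun _ => by simp⟩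
  refine supermartingale_exp_sum_Icc
    (Y := fun t ω => empiricalBernsteinIncrement (lam t ω) (ξ t ω) (μ[ξ t | ℱ (t - 1)] ω)
      (q (t - 1) ω)) (fun n => ?_) (fun n => ⟨2 * B, ?_⟩) fun n =>
    condExp_exp_empiricalBernsteinIncrement_le_one (ℱ.le n) ((hadapted _).mono (ℱ.le _) le_rfl)
      (hξbd _) (hlampred (n + 1) (Nat.le_add_left 1 n)) (hqpred n) (hlam _ (Nat.le_add_left 1 n))
      (hq _ (Nat.le_add_left 1 n))
  · have hle : ℱ n ≤ ℱ (n + 1) := ℱ.mono n.le_succ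
    exact ((hlampred (n + 1) (Nat.le_add_left 1 n)).mono hle le_rfl).empiricalBernsteinIncrement
      (hadapted _) (stronglyMeasurable_condExp.measurable.mono hle le_rfl)
      ((hqpred n).mono hle le_rfl)
  · filter_upwards [hξbd (n + 1), ae_bdd_abs_condExp_of_ae_bdd_abs (m := ℱ n) (hξbd (n + 1)),
      hlam _ (Nat.le_add_left 1 n)] with ω hx hc ⟨hl0, hl1⟩
    exact empiricalBernsteinIncrement_le hl0 hl1 hx hc
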